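/- Let (G_n, f_n: G_{n+1} → G_n)_{n≥1} be a tower of groups, let K_n be a subgroup of the center of G_n with f_n(K_{n+1}) ⊆ K_n, and let H_n = G_n/K_n with the induced tower maps, so that 1 → K_n → G_n → H_n → 1 is a central extension for each n, compatibly with the tower maps. Then: (i) lim¹ K_n is an abelian group under coordinatewise multiplication; (ii) the coordinatewise multiplication action of ∏_n K_n on ∏_n G_n descends to a well-defined action of the group lim¹ K_n on the pointed set lim¹ G_n; and (iii) if x, y ∈ lim¹ G_n have the same image in lim¹ H_n, then there exists a ∈ lim¹ K_n with x·a = y. -/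

import Mathlib

universe u
namespace PhantomMaps

/-! ### `lim¹` of a tower of groups -/

/-- The orbit relation on `∏ₙ Gₙ` defining `lim¹`: `a` and `b` are related iff
`b n = c n * a n * (f n (c (n+1)))⁻¹` for some `c`. -/
def Lim1Rel (G : ℕ → Type u) [∀ n, Group (G n)] (f : ∀ n, G (n + 1) →* G n)
    (a b : ∀ n, G n) : Prop :=
  ∃ c : ∀ n, G n, ∀ n, b n = c n * a n * (f n (c (n + 1)))⁻¹

/-- `lim¹` of a tower of groups: the orbit set of the action of `∏ₙ Gₙ` on itself,
pointed by the orbit of the identity. -/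
def Lim1 (G : ℕ → Type u) [∀ n, Group (G n)] (f : ∀ n, G (n + 1) →* G n) : Type u :=
  Quot (Lim1Rel G f)

/-- The basepoint of `lim¹`. -/
def Lim1.pt (G : ℕ → Type u) [∀ n, Group (G n)] (f : ∀ n, G (n + 1) →* G n) : Lim1 G f :=
  Quot.mk _ (fun _ => 1)

end PhantomMaps

/-!
Since `Kₙ` is central, multiplying by an element of `∏ Kₙ` commutes with the twist
`a ↦ c a f(c)⁻¹`, on either side; hence coordinatewise multiplication respects the `lim¹`
relations. For (iii), a witness `c` of `q x ~ q y` lifts along the surjections `qₙ` to a witness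
`x ~ x'` with `q x' = q y`, so `y = x' k` with `k = x'⁻¹ y ∈ ∏ Kₙ`, and then `x k ~ x' k = y`.
-/

namespace PhantomMaps

namespace Lim1Rel

variable {A : ℕ → Type u} [∀ n, Group (A n)] {φ : ∀ n, A (n + 1) →* A n}

theorem refl (a : ∀ n, A n) : Lim1Rel A φ a a :=
  ⟨1, fun n => by simp⟩

theorem trans {a b c : ∀ n, A n} (hab : Lim1Rel A φ a b) (hbc : Lim1Rel A φ b c) :
    Lim1Rel A φ a c := by
  obtain ⟨u, hu⟩ := hab
  obtain ⟨v, hv⟩ := hbc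
  refine ⟨v * u, fun n => ?_⟩
  simp only [hv n, hu n, Pi.mul_apply, map_mul, mul_inv_rev, mul_assoc]

theorem mul_right_of_mem_center {a a' : ∀ n, A n} (h : Lim1Rel A φ a a') {k : ∀ n, A n}
    (hk : ∀ n, k n ∈ Subgroup.center (A n)) : Lim1Rel A φ (a * k) (a' * k) := by
  obtain ⟨c, hc⟩ := h
  refine ⟨c, fun n => ?_⟩
  have hkc : k n * (φ n (c (n + 1)))⁻¹ = (φ n (c (n + 1)))⁻¹ * k n :=
    ((Subgroup.mem_center_iff.mp (hk n)) _).symm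
  simp only [Pi.mul_apply, hc n, mul_assoc, hkc]

theorem mul_left_of_witness_mem_center {a a' d : ∀ n, A n}
    (hd : ∀ n, d n ∈ Subgroup.center (A n)) (h : ∀ n, a' n = d n * a n * (φ n (d (n + 1)))⁻¹)
    (g : ∀ n, A n) : Lim1Rel A φ (g * a) (g * a') := by
  refine ⟨d, fun n => ?_⟩
  have hdg : g n * d n = d n * g n := Subgroup.mem_center_iff.mp (hd n) (g n)
  simp only [Pi.mul_apply, h n, ← mul_assoc, hdg]

theorem mul_of_commute (hA : ∀ n (x y : A n), x * y = y * x) {a a' b b' : ∀ n, A n}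
    (ha : Lim1Rel A φ a a') (hb : Lim1Rel A φ b b') : Lim1Rel A φ (a * b) (a' * b') := by
  have hcen : ∀ n (x : A n), x ∈ Subgroup.center (A n) := fun n x =>
    Subgroup.mem_center_iff.mpr (hA n · x)
  obtain ⟨d, hd⟩ := hb
  exact (ha.mul_right_of_mem_center (hcen · _)).trans
    (mul_left_of_witness_mem_center (hcen · _) hd a')

theorem exists_lift {B : ℕ → Type u} [∀ n, Group (B n)] {ψ : ∀ n, B (n + 1) →* B n}
    {p : ∀ n, A n →* B n} (hp : ∀ n, Function.Surjective (p n))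
    (hpφ : ∀ n a, ψ n (p (n + 1) a) = p n (φ n a)) {x y : ∀ n, A n}
    (h : Lim1Rel B ψ (fun n => p n (x n)) (fun n => p n (y n))) :
    ∃ x', Lim1Rel A φ x x' ∧ ∀ n, p n (x' n) = p n (y n) := by
  obtain ⟨c, hc⟩ := h
  choose g hg using fun n => hp n (c n)
  refine ⟨fun n => g n * x n * (φ n (g (n + 1)))⁻¹, ⟨g, fun n => rfl⟩, fun n => ?_⟩
  simp only [map_mul, map_inv, ← hpφ, hg, hc n]

end Lim1Rel

def towerRestrict {G : ℕ → Type u} [∀ n, Group (G n)] (f : ∀ n, G (n + 1) →* G n)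
    (K : ∀ n, Subgroup (G n)) (hfK : ∀ n, (K (n + 1)).map (f n) ≤ K n) (n : ℕ) :
    K (n + 1) →* K n :=
  ((f n).domRestrict (K (n + 1))).codRestrict (K n) (fun k => hfK n ⟨k.1, k.2, rfl⟩)

theorem lim1Rel_mul_coe_of_towerRestrict {G : ℕ → Type u} [∀ n, Group (G n)]
    {f : ∀ n, G (n + 1) →* G n} {K : ∀ n, Subgroup (G n)} (hK : ∀ n, K n ≤ Subgroup.center (G n))
    {hfK : ∀ n, (K (n + 1)).map (f n) ≤ K n} {k k' : ∀ n, K n}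
    (h : Lim1Rel (fun n => K n) (towerRestrict f K hfK) k k') (g : ∀ n, G n) :
    Lim1Rel G f (fun n => g n * k n) (fun n => g n * k' n) := by
  obtain ⟨d, hd⟩ := h
  exact Lim1Rel.mul_left_of_witness_mem_center (φ := f) (a := fun n => k n) (d := fun n => d n)
    (fun n => hK n (d n).2) (fun n => congrArg Subtype.val (hd n)) g

/-- Let `(Gₙ)` be a tower of groups, `Kₙ ≤ Z(Gₙ)` central subgroups with
`fₙ(K_{n+1}) ⊆ Kₙ`, and `Hₙ = Gₙ/Kₙ` the quotient tower (presented by surjections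
`qₙ : Gₙ → Hₙ` with kernel `Kₙ`), so that `1 → Kₙ → Gₙ → Hₙ → 1` is a central extension
of towers. Then (i) the coordinatewise multiplication descends to `lim¹ Kₙ` and makes it
an abelian group (commutativity holding already on representatives since `Kₙ` is
central), (ii) coordinatewise multiplication descends to an action of `lim¹ Kₙ` on
`lim¹ Gₙ`, and (iii) two elements of `lim¹ Gₙ` with the same image in `lim¹ Hₙ` differ by
this action. -/
theorem lim1_central_extension
    (G : ℕ → Type u) [∀ n, Group (G n)] (f : ∀ n, G (n + 1) →* G n)
    (K : ∀ n, Subgroup (G n)) (hK : ∀ n, K n ≤ Subgroup.center (G n))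
    (hfK : ∀ n, (K (n + 1)).map (f n) ≤ K n)
    (H : ℕ → Type u) [∀ n, Group (H n)] (fH : ∀ n, H (n + 1) →* H n)
    (q : ∀ n, G n →* H n) (hq : ∀ n, Function.Surjective (q n))
    (hker : ∀ n, (q n).ker = K n)
    (hcomm : ∀ n g, fH n (q (n + 1) g) = q n (f n g)) :
    -- the tower of central subgroups, as a tower of groups
    letI KG : ℕ → Type u := fun n => ↥(K n)
    letI fK : ∀ n, KG (n + 1) →* KG n := fun n =>
      ((f n).domRestrict (K (n + 1))).codRestrict (K n)
        (fun k => hfK n ⟨k.1, k.2, rfl⟩)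
    -- (i) coordinatewise multiplication descends to `lim¹ K` and is commutative there
    ((∀ a a' b b' : ∀ n, KG n, Lim1Rel KG fK a a' → Lim1Rel KG fK b b' →
        Lim1Rel KG fK (a * b) (a' * b')) ∧
      (∀ a b : ∀ n, KG n, a * b = b * a) ∧
      (∃ mul : Lim1 KG fK → Lim1 KG fK → Lim1 KG fK,
        ∀ a b : ∀ n, KG n, mul (Quot.mk _ a) (Quot.mk _ b) = Quot.mk _ (a * b))) ∧
    -- (ii) the coordinatewise action of `∏ K` on `∏ G` descends to an action of
    -- `lim¹ K` on `lim¹ G`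
    (∃ act : Lim1 KG fK → Lim1 G f → Lim1 G f,
      (∀ (k : ∀ n, KG n) (g : ∀ n, G n),
        act (Quot.mk _ k) (Quot.mk _ g) = Quot.mk _ (fun n => g n * (k n : G n))) ∧
      -- (iii) if `x, y ∈ lim¹ G` have the same image in `lim¹ H`,
      -- then `y = x · a` for some `a ∈ lim¹ K`
      (∀ x y : ∀ n, G n,
        Lim1Rel H fH (fun n => q n (x n)) (fun n => q n (y n)) →
        ∃ a : Lim1 KG fK, act a (Quot.mk _ x) = Quot.mk _ y)) := by
  have hKcomm : ∀ n (x y : K n), x * y = y * x := fun n x y =>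
    Subtype.ext (Subgroup.mem_center_iff.mp (hK n y.2) x)
  have hmul : ∀ a a' b b' : ∀ n, K n,
      Lim1Rel _ (towerRestrict f K hfK) a a' → Lim1Rel _ (towerRestrict f K hfK) b b' →
        Lim1Rel _ (towerRestrict f K hfK) (a * b) (a' * b') :=
    fun _ _ _ _ => Lim1Rel.mul_of_commute hKcomm
  let act : Lim1 (fun n => K n) (towerRestrict f K hfK) → Lim1 G f → Lim1 G f :=
    Quot.map₂ (fun k g n => g n * k n)
      (fun k _ _ hg => hg.mul_right_of_mem_center (k := fun n => k n) (fun n => hK n (k n).2))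
      (fun _ _ g hk => lim1Rel_mul_coe_of_towerRestrict hK hk g)
  refine ⟨⟨hmul, fun a b => funext fun n => hKcomm n (a n) (b n),
      Quot.map₂ (· * ·) (fun a _ _ => hmul a a _ _ (.refl a))
        (fun _ _ b ha => hmul _ _ b b ha (.refl b)), fun _ _ => rfl⟩,
    act, fun _ _ => rfl, ?_⟩
  intro x y hxy
  obtain ⟨x', hxx', hx'y⟩ := Lim1Rel.exists_lift hq hcomm hxy
  have hmem : ∀ n, (x' n)⁻¹ * y n ∈ K n := fun n => by
    rw [← hker n, MonoidHom.mem_ker, map_mul, map_inv, hx'y, inv_mul_cancel]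
  refine ⟨Quot.mk _ fun n => ⟨(x' n)⁻¹ * y n, hmem n⟩, Quot.sound ?_⟩
  have hrel := hxx'.mul_right_of_mem_center (k := x'⁻¹ * y) (fun n => hK n (hmem n))
  rwa [mul_inv_cancel_left] at hrel

end PhantomMaps
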